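/- Let R be a commutative ring, e ≥ 2 an integer, A := R[X]/(X^e), π the image of X, E a finite free A-module of rank h₁, and let 0 = F^{[0]} ⊆ F^{[1]} ⊆ ⋯ ⊆ F^{[e]} be a Pappas–Rapoport filtration of rank d₁ on E, with 0 < d₁ < h₁. For 1 ≤ j ≤ e set F^{[e+j]} := {x ∈ E : π^j·x ∈ F^{[e−j]}} and for 0 ≤ j ≤ e−1 set F'^{[j]} := {x ∈ E : π·x ∈ F^{[j]}}. Then for every 1 ≤ j ≤ e, multiplication by π^{e−j} induces a well-defined R-module isomorphism α^{[j]} : F^{[2e+1−j]}/F^{[2e−j]} ≅ F'^{[j−1]}/F^{[j]} (well-defined because π^{e−j}·F^{[2e+1−j]} ⊆ F'^{[j−1]} and π^{e−j}·F^{[2e−j]} ⊆ F^{[j]}). -/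

import Mathlib

/-- The ring `A = R[X]/(X^e)`. -/
abbrev TruncPoly (R : Type*) [CommRing R] (e : ℕ) : Type _ :=
  Polynomial R ⧸ Ideal.span {(Polynomial.X : Polynomial R) ^ e}

/-- The image `π` of `X` in `A = R[X]/(X^e)`. -/
noncomputable def piX (R : Type*) [CommRing R] (e : ℕ) : TruncPoly R e :=
  Ideal.Quotient.mk _ Polynomial.X

/-- Multiplication by `π^k`, as an `R`-linear endomorphism of a module over `R[X]/(X^e)`. -/
noncomputable def mulPi (R : Type*) [CommRing R] (e : ℕ)
    (E : Type*) [AddCommGroup E] [Module (TruncPoly R e) E] [Module R E]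
    [IsScalarTower R (TruncPoly R e) E] (k : ℕ) : E →ₗ[R] E :=
  (LinearMap.lsmul (TruncPoly R e) E (piX R e ^ k)).restrictScalars R

/-- A Pappas–Rapoport filtration of rank `d₁` on a module `E` over `A = R[X]/(X^e)`:
a chain of `R`-submodules `0 = F^{[0]} ⊆ F^{[1]} ⊆ ⋯ ⊆ F^{[e]}` of `E` such that each
`F^{[j]}` is an `R`-module direct summand of `E`, each quotient `F^{[j]}/F^{[j-1]}` is a
finite free `R`-module of rank `d₁`, and `π·F^{[j]} ⊆ F^{[j-1]}` for `1 ≤ j ≤ e`. -/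
def IsPRFiltration (R : Type*) [CommRing R] (e : ℕ)
    (E : Type*) [AddCommGroup E] [Module (TruncPoly R e) E] [Module R E]
    [IsScalarTower R (TruncPoly R e) E] (d₁ : ℕ) (F : ℕ → Submodule R E) : Prop :=
  F 0 = ⊥ ∧
  (∀ j < e, F j ≤ F (j + 1)) ∧
  (∀ j ≤ e, ∃ q : Submodule R E, IsCompl (F j) q) ∧
  (∀ j < e,
    Module.Finite R (↥(F (j + 1)) ⧸ (F j).comap (F (j + 1)).subtype) ∧
    Module.Free R (↥(F (j + 1)) ⧸ (F j).comap (F (j + 1)).subtype) ∧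
    Module.finrank R (↥(F (j + 1)) ⧸ (F j).comap (F (j + 1)).subtype) = d₁) ∧
  (∀ j < e, ∀ x ∈ F (j + 1), piX R e • x ∈ F j)

/-- The member `F^{[e+j]} := {x ∈ E : π^j·x ∈ F^{[e-j]}}` of the extended
(dual) Pappas–Rapoport filtration. -/
noncomputable def PRext (R : Type*) [CommRing R] (e : ℕ)
    (E : Type*) [AddCommGroup E] [Module (TruncPoly R e) E] [Module R E]
    [IsScalarTower R (TruncPoly R e) E] (F : ℕ → Submodule R E) (j : ℕ) : Submodule R E :=
  (F (e - j)).comap (mulPi R e E j)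

/-- The submodule `F'^{[j]} := {x ∈ E : π·x ∈ F^{[j]}}`. -/
noncomputable def PRdiv (R : Type*) [CommRing R] (e : ℕ)
    (E : Type*) [AddCommGroup E] [Module (TruncPoly R e) E] [Module R E]
    [IsScalarTower R (TruncPoly R e) E] (F : ℕ → Submodule R E) (j : ℕ) : Submodule R E :=
  (F j).comap (mulPi R e E 1)

/-!
Multiplication by `π^{e-j}` sends `x` with `π^{e+1-j}·x ∈ F^{[j-1]}` to `y` with `π·y ∈ F^{[j-1]}`,
and its kernel modulo `F^{[j]}` is `F^{[2e-j]}` by the very definition of `F^{[2e-j]}`. The only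
real input is surjectivity: if `π·y ∈ F^{[j-1]}` then `π^j·y = 0`, because `F^{[j-1]}` is killed by
`π^{j-1}`; in `R[X]/(X^e)` the annihilator of `π^j` is `π^{e-j}A`, and freeness of `E` carries this
over to `E`, so `y = π^{e-j}·x` for some `x`, which then lies in `F^{[2e+1-j]}`.
-/

namespace LinearMap

variable {R M N : Type*} [Ring R] [AddCommGroup M] [Module R M] [AddCommGroup N] [Module R N]
  (f : M →ₗ[R] N) {U V : Submodule R M} {W G : Submodule R N}

noncomputable def subquotientEquiv (hUW : ∀ x ∈ U, f x ∈ W) (hV : ∀ x ∈ U, f x ∈ G ↔ x ∈ V)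
    (hWU : W ≤ U.map f) : (U ⧸ V.comap U.subtype) ≃ₗ[R] (W ⧸ G.comap W.subtype) :=
  (Submodule.quotEquivOfEq _ _ (by ext x; simp [Submodule.Quotient.mk_eq_zero, hV x x.2])).trans
    (((G.comap W.subtype).mkQ ∘ₗ f.restrict hUW).quotKerEquivOfSurjective <| by
      rintro ⟨⟨y, hy⟩⟩
      obtain ⟨x, hx, rfl⟩ := hWU hy
      exact ⟨⟨x, hx⟩, rfl⟩)

theorem subquotientEquiv_mk (hUW : ∀ x ∈ U, f x ∈ W) (hV : ∀ x ∈ U, f x ∈ G ↔ x ∈ V)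
    (hWU : W ≤ U.map f) (x : U) :
    f.subquotientEquiv hUW hV hWU (Submodule.Quotient.mk x) =
      Submodule.Quotient.mk ⟨f x, hUW x x.2⟩ :=
  rfl

end LinearMap

theorem Module.Free.exists_eq_smul_of_smul_eq_zero {A M : Type*} [Semiring A] [AddCommMonoid M]
    [Module A M] [Module.Free A M] {a b : A} (hab : ∀ c : A, a * c = 0 → b ∣ c) {y : M}
    (hy : a • y = 0) : ∃ x : M, y = b • x := by
  let B := Module.Free.chooseBasis A M
  have hdvd : ∀ i, b ∣ B.repr y i := fun i => hab _ <| by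
    rw [← smul_eq_mul, ← Finsupp.smul_apply, ← map_smul, hy, map_zero, Finsupp.zero_apply]
  choose d hd using hdvd
  refine ⟨∑ i ∈ (B.repr y).support, d i • B i, ?_⟩
  conv_lhs => rw [← B.linearCombination_repr y]
  simp only [Finsupp.linearCombination_apply, Finsupp.sum, Finset.smul_sum, hd, mul_smul]

section TruncPoly

variable {R : Type*} [CommRing R] {e : ℕ}

theorem piX_pow_dvd_of_piX_pow_mul_eq_zero {j : ℕ} (hj : j ≤ e) {a : TruncPoly R e}
    (ha : piX R e ^ j * a = 0) : piX R e ^ (e - j) ∣ a := by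
  obtain ⟨p, rfl⟩ := Ideal.Quotient.mk_surjective a
  have hXe : (Polynomial.X : Polynomial R) ^ e = Polynomial.X ^ j * Polynomial.X ^ (e - j) := by
    rw [← pow_add, Nat.add_sub_cancel' hj]
  rw [piX, ← map_pow, ← map_mul, Ideal.Quotient.eq_zero_iff_mem, Ideal.mem_span_singleton, hXe,
    (Polynomial.isRegular_X_pow j).left.dvd_cancel_left] at ha
  rw [piX, ← map_pow]
  exact map_dvd _ ha

variable {E : Type*} [AddCommGroup E] [Module (TruncPoly R e) E] [Module R E]
  [IsScalarTower R (TruncPoly R e) E] {F : ℕ → Submodule R E}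

theorem mulPi_apply (k : ℕ) (x : E) : mulPi R e E k x = piX R e ^ k • x :=
  rfl

theorem mem_PRext {k : ℕ} {x : E} : x ∈ PRext R e E F k ↔ piX R e ^ k • x ∈ F (e - k) :=
  Iff.rfl

theorem mem_PRdiv {k : ℕ} {x : E} : x ∈ PRdiv R e E F k ↔ piX R e • x ∈ F k := by
  rw [PRdiv, Submodule.mem_comap, mulPi_apply, pow_one]

theorem IsPRFiltration.piX_pow_smul_eq_zero {d₁ : ℕ} (hF : IsPRFiltration R e E d₁ F) {i : ℕ}
    (hi : i ≤ e) {x : E} (hx : x ∈ F i) : piX R e ^ i • x = 0 := by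
  induction i generalizing x with
  | zero => rw [hF.1, Submodule.mem_bot] at hx; rw [hx, smul_zero]
  | succ i ih => rw [pow_succ, mul_smul]; exact ih (by omega) (hF.2.2.2.2 i (by omega) x hx)

theorem IsPRFiltration.PRdiv_le_map_PRext [Module.Free (TruncPoly R e) E] {d₁ : ℕ}
    (hF : IsPRFiltration R e E d₁ F) {j : ℕ} (hj1 : 1 ≤ j) (hje : j ≤ e) :
    PRdiv R e E F (j - 1) ≤ (PRext R e E F (e + 1 - j)).map (mulPi R e E (e - j)) := by
  intro y hy
  rw [mem_PRdiv] at hy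
  have hkill : piX R e ^ j • y = 0 := by
    rw [← Nat.sub_add_cancel hj1, pow_succ, mul_smul]
    exact hF.piX_pow_smul_eq_zero (by omega) hy
  obtain ⟨x, rfl⟩ := Module.Free.exists_eq_smul_of_smul_eq_zero
    (fun _ => piX_pow_dvd_of_piX_pow_mul_eq_zero hje) hkill
  refine ⟨x, mem_PRext.2 ?_, rfl⟩
  rwa [show e - (e + 1 - j) = j - 1 by omega, show e + 1 - j = e - j + 1 by omega,
    pow_succ', mul_smul]

end TruncPoly

theorem pappas_rapoport_alpha_iso_general
    (R : Type*) [CommRing R] (e : ℕ) (d₁ : ℕ)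
    (E : Type*) [AddCommGroup E] [Module (TruncPoly R e) E] [Module R E]
    [IsScalarTower R (TruncPoly R e) E]
    [Module.Free (TruncPoly R e) E]
    (F : ℕ → Submodule R E) (hF : IsPRFiltration R e E d₁ F)
    (j : ℕ) (hj1 : 1 ≤ j) (hje : j ≤ e) :
    (∀ x ∈ PRext R e E F (e + 1 - j), piX R e ^ (e - j) • x ∈ PRdiv R e E F (j - 1)) ∧
    (∀ x ∈ PRext R e E F (e - j), piX R e ^ (e - j) • x ∈ F j) ∧
    ∃ α : (↥(PRext R e E F (e + 1 - j)) ⧸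
          (PRext R e E F (e - j)).comap (PRext R e E F (e + 1 - j)).subtype) ≃ₗ[R]
        (↥(PRdiv R e E F (j - 1)) ⧸ (F j).comap (PRdiv R e E F (j - 1)).subtype),
      ∀ (x : PRext R e E F (e + 1 - j)) (hx : piX R e ^ (e - j) • (x : E) ∈ PRdiv R e E F (j - 1)),
        α (Submodule.Quotient.mk x) =
          Submodule.Quotient.mk (⟨piX R e ^ (e - j) • (x : E), hx⟩ : PRdiv R e E F (j - 1)) := by
  have hUW : ∀ x ∈ PRext R e E F (e + 1 - j), piX R e ^ (e - j) • x ∈ PRdiv R e E F (j - 1) := by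
    intro x hx
    rw [mem_PRdiv, smul_smul, ← pow_succ', show e - j + 1 = e + 1 - j by omega]
    rwa [mem_PRext, show e - (e + 1 - j) = j - 1 by omega] at hx
  have hV : ∀ x : E, piX R e ^ (e - j) • x ∈ F j ↔ x ∈ PRext R e E F (e - j) := fun x => by
    rw [mem_PRext, Nat.sub_sub_self hje]
  refine ⟨hUW, fun x hx => (hV x).2 hx,
    (mulPi R e E (e - j)).subquotientEquiv hUW (fun x _ => hV x) (hF.PRdiv_le_map_PRext hj1 hje),
    fun x _ => LinearMap.subquotientEquiv_mk _ _ _ _ x⟩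

/-- **The isomorphisms `α^{[j]}`.**
For `1 ≤ j ≤ e`, with `F^{[e+i]} := {x ∈ E : π^i·x ∈ F^{[e-i]}}` and
`F'^{[i]} := {x ∈ E : π·x ∈ F^{[i]}}`, multiplication by `π^{e-j}` induces a well-defined
`R`-module isomorphism `α^{[j]} : F^{[2e+1-j]}/F^{[2e-j]} ≅ F'^{[j-1]}/F^{[j]}`
(well-defined because `π^{e-j}·F^{[2e+1-j]} ⊆ F'^{[j-1]}` and `π^{e-j}·F^{[2e-j]} ⊆ F^{[j]}`). -/
theorem pappas_rapoport_alpha_iso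
    (R : Type*) [CommRing R] (e : ℕ) (he : 2 ≤ e) (h₁ d₁ : ℕ)
    (hd : 0 < d₁) (hdh : d₁ < h₁)
    (E : Type*) [AddCommGroup E] [Module (TruncPoly R e) E] [Module R E]
    [IsScalarTower R (TruncPoly R e) E]
    [Module.Finite (TruncPoly R e) E] [Module.Free (TruncPoly R e) E]
    (hrank : Module.finrank (TruncPoly R e) E = h₁)
    (F : ℕ → Submodule R E) (hF : IsPRFiltration R e E d₁ F)
    (j : ℕ) (hj1 : 1 ≤ j) (hje : j ≤ e) :
    (∀ x ∈ PRext R e E F (e + 1 - j), piX R e ^ (e - j) • x ∈ PRdiv R e E F (j - 1)) ∧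
    (∀ x ∈ PRext R e E F (e - j), piX R e ^ (e - j) • x ∈ F j) ∧
    ∃ α : (↥(PRext R e E F (e + 1 - j)) ⧸
          (PRext R e E F (e - j)).comap (PRext R e E F (e + 1 - j)).subtype) ≃ₗ[R]
        (↥(PRdiv R e E F (j - 1)) ⧸ (F j).comap (PRdiv R e E F (j - 1)).subtype),
      ∀ (x : PRext R e E F (e + 1 - j)) (hx : piX R e ^ (e - j) • (x : E) ∈ PRdiv R e E F (j - 1)),
        α (Submodule.Quotient.mk x) =
          Submodule.Quotient.mk (⟨piX R e ^ (e - j) • (x : E), hx⟩ : PRdiv R e E F (j - 1)) :=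
  pappas_rapoport_alpha_iso_general R e d₁ E F hF j hj1 hje
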